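/- arXiv:1901.05955 — 7 statements merged into one kernel-verified Lean document; each statement's English description precedes it below -/
import Mathlib

section
/- Let W, X, Y be discrete random variables with W taking values in [0,1], X taking nonnegative real values, and Y real-valued. Suppose for some 0 ≤ ε ≤ 1 and d ≥ 0 we have E[XY] = (1 ± ε)·d·E[X] and E[XY²] ≤ (1+ε)·d²·E[X], and suppose E[WX] > 0. Then |E[WXY] − d·E[WX]| ≤ (ε + 2·√(ε·E[X]/E[WX]))·d·E[WX]. -/
open Finset

/-!
Write `A = E[X]`, `B = E[WX]`. The hypotheses on `E[XY]` and `E[XY²]` give the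
`X`-weighted second moment bound `E[X(Y - d)²] ≤ 3εd²A`, and since `0 ≤ W ≤ 1` the same bound
holds for `E[WX(Y - d)²]`. Cauchy–Schwarz for the weight `WX` then gives
`(E[WXY] - dB)² = E[WX(Y - d)]² ≤ B · E[WX(Y - d)²] ≤ 3εd²AB`, so
`|E[WXY] - dB| ≤ 2d√(εAB) = 2√(εA/B) · dB`.
-/

section WeightedSums

variable {Ω : Type*} [Fintype Ω]

theorem sq_sum_mul_sub_le_sum_mul_sum_mul_sub_sq (q Y : Ω → ℝ) (d : ℝ) (hq : ∀ ω, 0 ≤ q ω) :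
    (∑ ω, q ω * Y ω - d * ∑ ω, q ω) ^ 2 ≤ (∑ ω, q ω) * ∑ ω, q ω * (Y ω - d) ^ 2 := by
  have hdev : ∑ ω, q ω * Y ω - d * ∑ ω, q ω = ∑ ω, q ω * (Y ω - d) := by
    rw [mul_sum, ← sum_sub_distrib]
    exact sum_congr rfl fun _ _ => by ring
  rw [hdev]
  exact sum_sq_le_sum_mul_sum_of_sq_le_mul _ (fun ω _ => hq ω)
    (fun ω _ => mul_nonneg (hq ω) (sq_nonneg _)) (fun _ _ => le_of_eq (by ring))

theorem sum_mul_sub_sq_eq (p Y : Ω → ℝ) (d : ℝ) :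
    ∑ ω, p ω * (Y ω - d) ^ 2
      = ∑ ω, p ω * Y ω ^ 2 - 2 * d * ∑ ω, p ω * Y ω + d ^ 2 * ∑ ω, p ω := by
  rw [mul_sum, mul_sum, ← sum_sub_distrib, ← sum_add_distrib]
  exact sum_congr rfl fun _ _ => by ring

theorem sum_mul_sub_sq_le (p Y : Ω → ℝ) {ε d : ℝ} (hd : 0 ≤ d)
    (h1 : (1 - ε) * (d * ∑ ω, p ω) ≤ ∑ ω, p ω * Y ω)
    (h2 : ∑ ω, p ω * Y ω ^ 2 ≤ (1 + ε) * d ^ 2 * ∑ ω, p ω) :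
    ∑ ω, p ω * (Y ω - d) ^ 2 ≤ 3 * ε * d ^ 2 * ∑ ω, p ω := by
  rw [sum_mul_sub_sq_eq]
  nlinarith [mul_le_mul_of_nonneg_left h1 hd]

end WeightedSums

theorem Real.sqrt_div_mul_self (x : ℝ) {b : ℝ} (hb : 0 ≤ b) : √(x / b) * b = √(x * b) := by
  rcases hb.eq_or_lt with rfl | hb
  · simp
  rw [← Real.sqrt_sq hb.le, ← Real.sqrt_mul' _ (sq_nonneg _), Real.sqrt_sq hb.le]
  congr 1
  field_simp

theorem abs_le_of_sq_le_mul_three_mul {D A B ε d : ℝ} (hA : 0 ≤ A) (hB : 0 ≤ B) (hε : 0 ≤ ε)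
    (hd : 0 ≤ d) (h : D ^ 2 ≤ B * (3 * ε * d ^ 2 * A)) :
    |D| ≤ (ε + 2 * √(ε * A / B)) * (d * B) := by
  have hεAB : 0 ≤ ε * A * B := by positivity
  calc |D| ≤ √((2 * d) ^ 2 * (ε * A * B)) :=
        Real.abs_le_sqrt (h.trans (by nlinarith [mul_nonneg hεAB (sq_nonneg d)]))
    _ = 2 * d * (√(ε * A / B) * B) := by
        rw [Real.sqrt_mul (sq_nonneg _), Real.sqrt_sq (by positivity),
          Real.sqrt_div_mul_self _ hB]
    _ ≤ (ε + 2 * √(ε * A / B)) * (d * B) := by nlinarith [mul_nonneg hε (mul_nonneg hd hB)]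

theorem ecs_dist_first_moment_general {Ω : Type*} [Fintype Ω] (μ W X Y : Ω → ℝ)
    (hμ0 : ∀ ω, 0 ≤ μ ω)
    (hW0 : ∀ ω, 0 ≤ W ω) (hW1 : ∀ ω, W ω ≤ 1) (hX : ∀ ω, 0 ≤ X ω)
    {ε d : ℝ} (hε0 : 0 ≤ ε) (hd : 0 ≤ d)
    (hXY : |(∑ ω, μ ω * (X ω * Y ω)) - d * (∑ ω, μ ω * X ω)|
      ≤ ε * (d * (∑ ω, μ ω * X ω)))
    (hXY2 : (∑ ω, μ ω * (X ω * Y ω ^ 2)) ≤ (1 + ε) * d ^ 2 * (∑ ω, μ ω * X ω)) :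
    |(∑ ω, μ ω * (W ω * X ω * Y ω)) - d * (∑ ω, μ ω * (W ω * X ω))|
      ≤ (ε + 2 * Real.sqrt (ε * (∑ ω, μ ω * X ω) / (∑ ω, μ ω * (W ω * X ω))))
        * (d * (∑ ω, μ ω * (W ω * X ω))) := by
  have hp : ∀ ω, 0 ≤ μ ω * X ω := fun ω => mul_nonneg (hμ0 ω) (hX ω)
  have hq : ∀ ω, 0 ≤ μ ω * (W ω * X ω) := fun ω => mul_nonneg (hμ0 ω) (mul_nonneg (hW0 ω) (hX ω))
  have hvar : ∑ ω, μ ω * X ω * (Y ω - d) ^ 2 ≤ 3 * ε * d ^ 2 * ∑ ω, μ ω * X ω :=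
    sum_mul_sub_sq_le _ Y hd (by simp only [mul_assoc]; linarith [(abs_le.mp hXY).1])
      (by simpa only [mul_assoc] using hXY2)
  have hvarW : ∑ ω, μ ω * (W ω * X ω) * (Y ω - d) ^ 2 ≤ ∑ ω, μ ω * X ω * (Y ω - d) ^ 2 :=
    sum_le_sum fun ω _ => mul_le_mul_of_nonneg_right
      (mul_le_mul_of_nonneg_left (mul_le_of_le_one_left (hX ω) (hW1 ω)) (hμ0 ω)) (sq_nonneg _)
  rw [sum_congr rfl fun ω _ => (mul_assoc (μ ω) (W ω * X ω) (Y ω)).symm]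
  refine abs_le_of_sq_le_mul_three_mul (sum_nonneg fun ω _ => hp ω) (sum_nonneg fun ω _ => hq ω)
    hε0 hd ?_
  calc _ ≤ _ := sq_sum_mul_sub_le_sum_mul_sum_mul_sub_sq _ Y d hq
    _ ≤ _ := mul_le_mul_of_nonneg_left (hvarW.trans hvar) (sum_nonneg fun ω _ => hq ω)

/-- Lemma `ECSdist`, first moment: on a finite probability space with
probability mass function `μ`, if `W ∈ [0,1]`, `X ≥ 0`, `E[XY] = (1 ± ε)·d·E[X]`,
`E[XY²] ≤ (1+ε)·d²·E[X]` and `E[WX] > 0`, then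
`|E[WXY] − d·E[WX]| ≤ (ε + 2√(ε·E[X]/E[WX]))·d·E[WX]`. -/
theorem ecs_dist_first_moment {Ω : Type*} [Fintype Ω] (μ W X Y : Ω → ℝ)
    (hμ0 : ∀ ω, 0 ≤ μ ω) (hμ1 : (∑ ω, μ ω) = 1)
    (hW0 : ∀ ω, 0 ≤ W ω) (hW1 : ∀ ω, W ω ≤ 1) (hX : ∀ ω, 0 ≤ X ω)
    {ε d : ℝ} (hε0 : 0 ≤ ε) (hε1 : ε ≤ 1) (hd : 0 ≤ d)
    (hXY : |(∑ ω, μ ω * (X ω * Y ω)) - d * (∑ ω, μ ω * X ω)|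
      ≤ ε * (d * (∑ ω, μ ω * X ω)))
    (hXY2 : (∑ ω, μ ω * (X ω * Y ω ^ 2)) ≤ (1 + ε) * d ^ 2 * (∑ ω, μ ω * X ω))
    (hWX : 0 < ∑ ω, μ ω * (W ω * X ω)) :
    |(∑ ω, μ ω * (W ω * X ω * Y ω)) - d * (∑ ω, μ ω * (W ω * X ω))|
      ≤ (ε + 2 * Real.sqrt (ε * (∑ ω, μ ω * X ω) / (∑ ω, μ ω * (W ω * X ω))))
        * (d * (∑ ω, μ ω * (W ω * X ω))) :=
  ecs_dist_first_moment_general μ W X Y hμ0 hW0 hW1 hX hε0 hd hXY hXY2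
end

section
/- Let W, X, Y be discrete random variables with W taking values in [0,1], X taking nonnegative real values, and Y real-valued. Suppose for some 0 ≤ ε ≤ 1 and d ≥ 0 we have E[XY] = (1 ± ε)·d·E[X] and E[XY²] ≤ (1+ε)·d²·E[X], and suppose E[WX] > 0. Then |E[WXY²] − d²·E[WX]| ≤ (2ε + 7·√ε·E[X]/E[WX])·d²·E[WX]. -/
/-!
Write `Y = d + (Y - d)`. Then `E[WXY²] - d²E[WX] = E[WX(Y-d)²] + 2d·E[WX(Y-d)]`. The two moment
hypotheses give the variance bound `E[X(Y-d)²] ≤ 3εd²E[X]`, which controls the first term since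
`W ≤ 1`, and, through Cauchy–Schwarz for the weights `WX`, also the second:
`E[WX(Y-d)]² ≤ E[WX]·E[WX(Y-d)²] ≤ 3εd²E[X]²`. Both are then at most a multiple of `√ε·d²E[X]`.
-/

open Finset

namespace Finset

variable {ι : Type*} {s : Finset ι} {ν W Y : ι → ℝ} {ε d : ℝ}

theorem sq_sum_mul_le_sum_mul_sum_mul_sq (hν : ∀ i ∈ s, 0 ≤ ν i) (f : ι → ℝ) :
    (∑ i ∈ s, ν i * f i) ^ 2 ≤ (∑ i ∈ s, ν i) * ∑ i ∈ s, ν i * f i ^ 2 :=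
  sum_sq_le_sum_mul_sum_of_sq_le_mul s hν (fun i hi => mul_nonneg (hν i hi) (sq_nonneg _))
    fun i _ => (by ring : (ν i * f i) ^ 2 = ν i * (ν i * f i ^ 2)).le

theorem sum_mul_sub_sq_le (hd : 0 ≤ d)
    (hY : |∑ i ∈ s, ν i * Y i - d * ∑ i ∈ s, ν i| ≤ ε * (d * ∑ i ∈ s, ν i))
    (hY2 : ∑ i ∈ s, ν i * Y i ^ 2 ≤ (1 + ε) * d ^ 2 * ∑ i ∈ s, ν i) :
    ∑ i ∈ s, ν i * (Y i - d) ^ 2 ≤ 3 * ε * d ^ 2 * ∑ i ∈ s, ν i := by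
  have hexpand : ∑ i ∈ s, ν i * (Y i - d) ^ 2
      = ∑ i ∈ s, ν i * Y i ^ 2 - 2 * d * ∑ i ∈ s, ν i * Y i + d ^ 2 * ∑ i ∈ s, ν i := by
    simp only [mul_sum, ← sum_sub_distrib, ← sum_add_distrib]
    exact sum_congr rfl fun i _ => by ring
  have hlower := mul_le_mul_of_nonneg_left (neg_le_of_abs_le hY) (by positivity : 0 ≤ 2 * d)
  rw [hexpand]
  nlinarith

theorem abs_sum_mul_mul_sq_sub_le (hν : ∀ i ∈ s, 0 ≤ ν i) (hW0 : ∀ i ∈ s, 0 ≤ W i)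
    (hW1 : ∀ i ∈ s, W i ≤ 1) (hε0 : 0 ≤ ε) (hε1 : ε ≤ 1) (hd : 0 ≤ d)
    (hY : |∑ i ∈ s, ν i * Y i - d * ∑ i ∈ s, ν i| ≤ ε * (d * ∑ i ∈ s, ν i))
    (hY2 : ∑ i ∈ s, ν i * Y i ^ 2 ≤ (1 + ε) * d ^ 2 * ∑ i ∈ s, ν i) :
    |∑ i ∈ s, ν i * W i * Y i ^ 2 - d ^ 2 * ∑ i ∈ s, ν i * W i|
      ≤ 7 * √ε * d ^ 2 * ∑ i ∈ s, ν i := by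
  set N := ∑ i ∈ s, ν i
  set V := ∑ i ∈ s, ν i * W i * (Y i - d) ^ 2
  set T := ∑ i ∈ s, ν i * W i * (Y i - d)
  have hνW : ∀ i ∈ s, 0 ≤ ν i * W i := fun i hi => mul_nonneg (hν i hi) (hW0 i hi)
  have hN : 0 ≤ N := sum_nonneg hν
  have hsplit : ∑ i ∈ s, ν i * W i * Y i ^ 2 - d ^ 2 * ∑ i ∈ s, ν i * W i = V + 2 * d * T := by
    simp only [V, T, mul_sum, ← sum_sub_distrib, ← sum_add_distrib]
    exact sum_congr rfl fun i _ => by ring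
  have hV0 : 0 ≤ V := sum_nonneg fun i hi => mul_nonneg (hνW i hi) (sq_nonneg _)
  have hV : V ≤ 3 * ε * d ^ 2 * N := by
    refine le_trans (sum_le_sum fun i hi => ?_) (sum_mul_sub_sq_le hd hY hY2)
    rw [mul_right_comm]
    exact mul_le_of_le_one_right (mul_nonneg (hν i hi) (sq_nonneg _)) (hW1 i hi)
  have hWN : ∑ i ∈ s, ν i * W i ≤ N :=
    sum_le_sum fun i hi => mul_le_of_le_one_right (hν i hi) (hW1 i hi)
  have hT : |T| ≤ 2 * √ε * d * N := by
    refine abs_le_of_sq_le_sq ?_ (by positivity)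
    calc T ^ 2 ≤ (∑ i ∈ s, ν i * W i) * V :=
          sq_sum_mul_le_sum_mul_sum_mul_sq hνW (fun i => Y i - d)
      _ ≤ N * (3 * ε * d ^ 2 * N) := mul_le_mul hWN hV hV0 hN
      _ ≤ (2 * √ε * d * N) ^ 2 := by
          rw [mul_pow, mul_pow, mul_pow, Real.sq_sqrt hε0]
          nlinarith [mul_nonneg hε0 (sq_nonneg (d * N))]
  have hεsqrt : ε ≤ √ε := Real.le_sqrt_self_iff.mpr hε1
  rw [hsplit]
  calc |V + 2 * d * T| ≤ V + 2 * d * |T| := by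
        simpa [abs_of_nonneg hV0, abs_mul, abs_of_nonneg hd] using abs_add_le V (2 * d * T)
    _ ≤ 3 * ε * d ^ 2 * N + 2 * d * (2 * √ε * d * N) := by gcongr
    _ ≤ 7 * √ε * d ^ 2 * N := by nlinarith [mul_nonneg (sq_nonneg d) hN]

end Finset

theorem ecs_dist_second_moment_general {Ω : Type*} [Fintype Ω] (μ W X Y : Ω → ℝ)
    (hμ0 : ∀ ω, 0 ≤ μ ω)
    (hW0 : ∀ ω, 0 ≤ W ω) (hW1 : ∀ ω, W ω ≤ 1) (hX : ∀ ω, 0 ≤ X ω)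
    {ε d : ℝ} (hε0 : 0 ≤ ε) (hε1 : ε ≤ 1) (hd : 0 ≤ d)
    (hXY : |(∑ ω, μ ω * (X ω * Y ω)) - d * (∑ ω, μ ω * X ω)|
      ≤ ε * (d * (∑ ω, μ ω * X ω)))
    (hXY2 : (∑ ω, μ ω * (X ω * Y ω ^ 2)) ≤ (1 + ε) * d ^ 2 * (∑ ω, μ ω * X ω))
    (hWX : 0 < ∑ ω, μ ω * (W ω * X ω)) :
    |(∑ ω, μ ω * (W ω * X ω * Y ω ^ 2)) - d ^ 2 * (∑ ω, μ ω * (W ω * X ω))|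
      ≤ (2 * ε + 7 * Real.sqrt ε * (∑ ω, μ ω * X ω) / (∑ ω, μ ω * (W ω * X ω)))
        * (d ^ 2 * (∑ ω, μ ω * (W ω * X ω))) := by
  have hEWX : ∑ ω, μ ω * (W ω * X ω) = ∑ ω, μ ω * X ω * W ω :=
    sum_congr rfl fun ω _ => by ring
  have hEWXY2 : ∑ ω, μ ω * (W ω * X ω * Y ω ^ 2) = ∑ ω, μ ω * X ω * W ω * Y ω ^ 2 :=
    sum_congr rfl fun ω _ => by ring
  simp only [← mul_assoc (μ _) (X _)] at hXY hXY2
  have key := abs_sum_mul_mul_sq_sub_le (s := univ) (fun ω _ => mul_nonneg (hμ0 ω) (hX ω))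
    (fun ω _ => hW0 ω) (fun ω _ => hW1 ω) hε0 hε1 hd hXY hXY2
  rw [← hEWX, ← hEWXY2] at key
  rw [add_mul, div_mul_eq_mul_div, mul_div_assoc, mul_div_cancel_right₀ _ hWX.ne']
  linarith [mul_nonneg (mul_nonneg (by positivity : (0 : ℝ) ≤ 2 * ε) (sq_nonneg d)) hWX.le]

/-- Lemma `ECSdist`, second moment: on a finite probability space with
probability mass function `μ`, if `W ∈ [0,1]`, `X ≥ 0`, `E[XY] = (1 ± ε)·d·E[X]`,
`E[XY²] ≤ (1+ε)·d²·E[X]` and `E[WX] > 0`, then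
`|E[WXY²] − d²·E[WX]| ≤ (2ε + 7√ε·E[X]/E[WX])·d²·E[WX]`. -/
theorem ecs_dist_second_moment {Ω : Type*} [Fintype Ω] (μ W X Y : Ω → ℝ)
    (hμ0 : ∀ ω, 0 ≤ μ ω) (hμ1 : (∑ ω, μ ω) = 1)
    (hW0 : ∀ ω, 0 ≤ W ω) (hW1 : ∀ ω, W ω ≤ 1) (hX : ∀ ω, 0 ≤ X ω)
    {ε d : ℝ} (hε0 : 0 ≤ ε) (hε1 : ε ≤ 1) (hd : 0 ≤ d)
    (hXY : |(∑ ω, μ ω * (X ω * Y ω)) - d * (∑ ω, μ ω * X ω)|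
      ≤ ε * (d * (∑ ω, μ ω * X ω)))
    (hXY2 : (∑ ω, μ ω * (X ω * Y ω ^ 2)) ≤ (1 + ε) * d ^ 2 * (∑ ω, μ ω * X ω))
    (hWX : 0 < ∑ ω, μ ω * (W ω * X ω)) :
    |(∑ ω, μ ω * (W ω * X ω * Y ω ^ 2)) - d ^ 2 * (∑ ω, μ ω * (W ω * X ω))|
      ≤ (2 * ε + 7 * Real.sqrt ε * (∑ ω, μ ω * X ω) / (∑ ω, μ ω * (W ω * X ω)))
        * (d ^ 2 * (∑ ω, μ ω * (W ω * X ω))) :=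
  ecs_dist_second_moment_general μ W X Y hμ0 hW0 hW1 hX hε0 hε1 hd hXY hXY2 hWX
end

section
/- Let X and Y be discrete random variables where X takes nonnegative real values and Y is real-valued. Suppose for some 0 ≤ ε ≤ 1 and d ≥ 0 we have E[XY] = (1 ± ε)·d·E[X] and E[XY²] ≤ (1+ε)·d²·E[X]. Let W be the indicator of the event that |Y − d| ≤ 2ε^{1/4}·d. Then E[WX] ≥ (1 − 4ε^{1/4})·E[X]. -/
/-! The hypotheses say that, weighted by `X`, the second moment of `Y - d` is at most
`3 ε d² E[X]`. Chebyshev's inequality at radius `2 ε^{1/4} d` then bounds the `X`-mass outside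
the window by `(3/4) ε^{1/2} E[X] ≤ 4 ε^{1/4} E[X]`. -/

open Finset

section WeightedMoments

variable {Ω : Type*} [Fintype Ω] (w f : Ω → ℝ)

lemma weighted_sum_mul_sub_sq_le {Y : Ω → ℝ} {ε d : ℝ} (hd : 0 ≤ d)
    (hY : |∑ ω, w ω * Y ω - d * ∑ ω, w ω| ≤ ε * (d * ∑ ω, w ω))
    (hY2 : ∑ ω, w ω * Y ω ^ 2 ≤ (1 + ε) * d ^ 2 * ∑ ω, w ω) :
    ∑ ω, w ω * (Y ω - d) ^ 2 ≤ 3 * ε * d ^ 2 * ∑ ω, w ω := by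
  have hexpand : ∑ ω, w ω * (Y ω - d) ^ 2
      = ∑ ω, w ω * Y ω ^ 2 - 2 * d * ∑ ω, w ω * Y ω + d ^ 2 * ∑ ω, w ω := by
    simp only [mul_sum, ← sum_sub_distrib, ← sum_add_distrib]
    exact sum_congr rfl fun ω _ => by ring
  have hfirst : (1 - ε) * (d * ∑ ω, w ω) ≤ ∑ ω, w ω * Y ω := by
    linarith [(abs_le.mp hY).1]
  rw [hexpand]
  nlinarith [mul_le_mul_of_nonneg_left hfirst (by positivity : (0 : ℝ) ≤ 2 * d)]

variable {w}

/-- Chebyshev's inequality for a weighted sum, phrased without division so that it also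
covers `r = 0`. -/
lemma sum_filter_lt_abs_le_of_weighted_sum_sq_le (hw : ∀ ω, 0 ≤ w ω) {r c : ℝ} (hr : 0 ≤ r)
    (hc : 0 ≤ c) (hf : ∑ ω, w ω * f ω ^ 2 ≤ r ^ 2 * c) :
    ∑ ω with r < |f ω|, w ω ≤ c := by
  have hterm_nonneg : ∀ ω ∈ univ, 0 ≤ w ω * f ω ^ 2 := fun ω _ => mul_nonneg (hw ω) (sq_nonneg _)
  have hchebyshev : r ^ 2 * ∑ ω with r < |f ω|, w ω ≤ ∑ ω, w ω * f ω ^ 2 := by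
    rw [mul_sum]
    refine (sum_le_sum fun ω hω => ?_).trans
      (sum_le_sum_of_subset_of_nonneg (filter_subset _ univ) fun ω hω _ => hterm_nonneg ω hω)
    have hfar : r ^ 2 ≤ f ω ^ 2 := by
      rw [← sq_abs (f ω)]
      exact pow_le_pow_left₀ hr (mem_filter.mp hω).2.le 2
    rw [mul_comm]
    exact mul_le_mul_of_nonneg_left hfar (hw ω)
  rcases hr.lt_or_eq with hr | rfl
  · exact le_of_mul_le_mul_left (hchebyshev.trans hf) (by positivity)
  · have hzero : ∀ ω ∈ univ, w ω * f ω ^ 2 = 0 := (sum_eq_zero_iff_of_nonneg hterm_nonneg).mp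
      (le_antisymm (by simpa using hf) (sum_nonneg hterm_nonneg))
    refine (sum_eq_zero fun ω hω => ?_).trans_le hc
    have hfω : f ω ≠ 0 := abs_pos.mp (mem_filter.mp hω).2
    simpa [hfω] using hzero ω (mem_univ ω)

end WeightedMoments

lemma sum_mul_indicator_mul_eq_sub {Ω : Type*} [Fintype Ω] (μ X f : Ω → ℝ) (r : ℝ) :
    ∑ ω, μ ω * ((if |f ω| ≤ r then (1 : ℝ) else 0) * X ω)
      = ∑ ω, μ ω * X ω - ∑ ω with r < |f ω|, μ ω * X ω := by
  calc ∑ ω, μ ω * ((if |f ω| ≤ r then (1 : ℝ) else 0) * X ω)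
      = ∑ ω with |f ω| ≤ r, μ ω * X ω := by
        rw [sum_filter]
        exact sum_congr rfl fun ω _ => by split_ifs <;> ring
    _ = ∑ ω, μ ω * X ω - ∑ ω with r < |f ω|, μ ω * X ω := by
        rw [eq_sub_iff_add_eq, ← sum_filter_add_sum_filter_not univ (fun ω => |f ω| ≤ r)]
        simp only [not_le]

theorem ecs_concentration_general {Ω : Type*} [Fintype Ω] (μ X Y : Ω → ℝ)
    (hμ0 : ∀ ω, 0 ≤ μ ω)
    (hX : ∀ ω, 0 ≤ X ω)
    {ε d : ℝ} (hε0 : 0 ≤ ε) (hε1 : ε ≤ 1) (hd : 0 ≤ d)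
    (hXY : |(∑ ω, μ ω * (X ω * Y ω)) - d * (∑ ω, μ ω * X ω)|
      ≤ ε * (d * (∑ ω, μ ω * X ω)))
    (hXY2 : (∑ ω, μ ω * (X ω * Y ω ^ 2)) ≤ (1 + ε) * d ^ 2 * (∑ ω, μ ω * X ω)) :
    (1 - 4 * ε ^ ((1 : ℝ) / 4)) * (∑ ω, μ ω * X ω)
      ≤ ∑ ω, μ ω * ((if |Y ω - d| ≤ 2 * ε ^ ((1 : ℝ) / 4) * d then (1 : ℝ) else 0) * X ω) := by
  set q : ℝ := ε ^ ((1 : ℝ) / 4) with hq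
  have hq0 : 0 ≤ q := Real.rpow_nonneg hε0 _
  have hq1 : q ≤ 1 := Real.rpow_le_one hε0 hε1 (by norm_num)
  have hq4 : q ^ 4 = ε := by
    rw [hq, ← Real.rpow_natCast, ← Real.rpow_mul hε0]
    norm_num
  have hw : ∀ ω, 0 ≤ μ ω * X ω := fun ω => mul_nonneg (hμ0 ω) (hX ω)
  rw [sum_mul_indicator_mul_eq_sub μ X (fun ω => Y ω - d)]
  set S := ∑ ω, μ ω * X ω
  have hS0 : 0 ≤ S := sum_nonneg fun ω _ => hw ω
  have hvar : ∑ ω, μ ω * X ω * (Y ω - d) ^ 2 ≤ (2 * q * d) ^ 2 * (3 / 4 * q ^ 2 * S) := by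
    have hmoment := weighted_sum_mul_sub_sq_le (fun ω => μ ω * X ω) hd
      (by simpa only [mul_assoc] using hXY) (by simpa only [mul_assoc] using hXY2)
    linear_combination hmoment - 3 * d ^ 2 * S * hq4
  have hfar := sum_filter_lt_abs_le_of_weighted_sum_sq_le (fun ω => Y ω - d) hw
    (by positivity) (by positivity) hvar
  nlinarith [mul_nonneg (mul_nonneg hq0 (sub_nonneg.mpr hq1)) hS0]

/-- Corollary `ECSconc`: on a finite probability space with probability
mass function `μ`, if `X ≥ 0`, `E[XY] = (1 ± ε)·d·E[X]` and `E[XY²] ≤ (1+ε)·d²·E[X]`,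
then letting `W` be the indicator of `|Y − d| ≤ 2ε^{1/4}·d` we have
`E[WX] ≥ (1 − 4ε^{1/4})·E[X]`. -/
theorem ecs_concentration {Ω : Type*} [Fintype Ω] (μ X Y : Ω → ℝ)
    (hμ0 : ∀ ω, 0 ≤ μ ω) (hμ1 : (∑ ω, μ ω) = 1)
    (hX : ∀ ω, 0 ≤ X ω)
    {ε d : ℝ} (hε0 : 0 ≤ ε) (hε1 : ε ≤ 1) (hd : 0 ≤ d)
    (hXY : |(∑ ω, μ ω * (X ω * Y ω)) - d * (∑ ω, μ ω * X ω)|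
      ≤ ε * (d * (∑ ω, μ ω * X ω)))
    (hXY2 : (∑ ω, μ ω * (X ω * Y ω ^ 2)) ≤ (1 + ε) * d ^ 2 * (∑ ω, μ ω * X ω)) :
    (1 - 4 * ε ^ ((1 : ℝ) / 4)) * (∑ ω, μ ω * X ω)
      ≤ ∑ ω, μ ω * ((if |Y ω - d| ≤ 2 * ε ^ ((1 : ℝ) / 4) * d then (1 : ℝ) else 0) * X ω) :=
  ecs_concentration_general μ X Y hμ0 hX hε0 hε1 hd hXY hXY2
end

section
/- Let X and Y be discrete random variables where X takes nonnegative real values and Y is real-valued. Suppose for a natural number t ≥ 2 and reals 0 ≤ ε < 2^{2−2t} and d ≥ 0 we have E[XY] = (1 ± ε)·d·E[X] and E[X·Y^{2^t}] ≤ (1+ε)·d^{2^t}·E[X]. Let W be the indicator of the event that |Y − d| ≤ 2ε^{1/8}·d. Then E[WX] ≥ (1 − 4ε^{1/8})·E[X]. -/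
/-!
Weight everything by `w = μ·X ≥ 0`. Iterating the weighted Cauchy–Schwarz inequality
`(Σ w g)² ≤ (Σ w)(Σ w g²)` brings the bound on the `2^t`-th moment of `Y` down to
`Σ w Y² ≤ (1+ε) d² Σ w`; with the first-moment bound this gives the weighted variance bound
`Σ w (Y-d)² ≤ 3 ε d² Σ w`. Chebyshev at threshold `2 ε^{1/8} d` then leaves at most
`(3/4) ε^{3/4} Σ w ≤ 4 ε^{1/8} Σ w` of the weight outside the event, the last step being
trivial when `4 ε^{1/8} ≥ 1`.
-/

open Finset

section WeightedMoments

variable {Ω : Type*} [Fintype Ω] {w : Ω → ℝ}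

theorem sq_sum_mul_le_sum_mul_sum_mul_sq (hw : ∀ ω, 0 ≤ w ω) (g : Ω → ℝ) :
    (∑ ω, w ω * g ω) ^ 2 ≤ (∑ ω, w ω) * ∑ ω, w ω * g ω ^ 2 :=
  sum_sq_le_sum_mul_sum_of_sq_le_mul _ (fun ω _ => hw ω)
    (fun ω _ => mul_nonneg (hw ω) (sq_nonneg _)) fun ω _ => le_of_eq (by ring)

theorem sum_mul_le_of_sum_mul_sq_le (hw : ∀ ω, 0 ≤ w ω) {g : Ω → ℝ} {ε a : ℝ}
    (hε : 0 ≤ ε) (ha : 0 ≤ a)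
    (h : ∑ ω, w ω * g ω ^ 2 ≤ (1 + ε) * a ^ 2 * ∑ ω, w ω) :
    ∑ ω, w ω * g ω ≤ (1 + ε) * a * ∑ ω, w ω := by
  have hS : 0 ≤ ∑ ω, w ω := sum_nonneg fun ω _ => hw ω
  refine le_of_abs_le (abs_le_of_sq_le_sq ?_ (by positivity))
  calc (∑ ω, w ω * g ω) ^ 2 ≤ (∑ ω, w ω) * ∑ ω, w ω * g ω ^ 2 :=
        sq_sum_mul_le_sum_mul_sum_mul_sq hw g
    _ ≤ (∑ ω, w ω) * ((1 + ε) * a ^ 2 * ∑ ω, w ω) := by gcongr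
    _ ≤ ((1 + ε) * a * ∑ ω, w ω) ^ 2 := by
        have : 1 + ε ≤ (1 + ε) ^ 2 := by nlinarith
        nlinarith [mul_nonneg (sq_nonneg a) (sq_nonneg (∑ ω, w ω))]

theorem sum_mul_pow_two_pow_le_of_le (hw : ∀ ω, 0 ≤ w ω) {f : Ω → ℝ} {ε a : ℝ}
    (hε : 0 ≤ ε) (ha : 0 ≤ a) {k n : ℕ} (hkn : k ≤ n)
    (h : ∑ ω, w ω * f ω ^ 2 ^ n ≤ (1 + ε) * a ^ 2 ^ n * ∑ ω, w ω) :
    ∑ ω, w ω * f ω ^ 2 ^ k ≤ (1 + ε) * a ^ 2 ^ k * ∑ ω, w ω := by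
  induction n, hkn using Nat.le_induction with
  | base => exact h
  | succ n _ ih =>
    refine ih (sum_mul_le_of_sum_mul_sq_le hw hε (pow_nonneg ha _) ?_)
    simpa only [pow_succ, pow_mul] using h

theorem sum_mul_sub_sq_le_s3 {f : Ω → ℝ} {ε a : ℝ} (ha : 0 ≤ a)
    (h₁ : |∑ ω, w ω * f ω - a * ∑ ω, w ω| ≤ ε * a * ∑ ω, w ω)
    (h₂ : ∑ ω, w ω * f ω ^ 2 ≤ (1 + ε) * a ^ 2 * ∑ ω, w ω) :
    ∑ ω, w ω * (f ω - a) ^ 2 ≤ 3 * ε * a ^ 2 * ∑ ω, w ω := by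
  have hexpand : ∑ ω, w ω * (f ω - a) ^ 2
      = ∑ ω, w ω * f ω ^ 2 - 2 * a * ∑ ω, w ω * f ω + a ^ 2 * ∑ ω, w ω := by
    simp only [mul_sum, ← sum_sub_distrib, ← sum_add_distrib]
    exact sum_congr rfl fun ω _ => by ring
  have hmean := (abs_le.mp h₁).1
  rw [hexpand]
  nlinarith [mul_le_mul_of_nonneg_left hmean ha]

theorem sum_filter_lt_abs_le (hw : ∀ ω, 0 ≤ w ω) {f : Ω → ℝ} {c l : ℝ} (hc : 0 ≤ c)
    (hl : 0 ≤ l) (h : ∑ ω, w ω * f ω ^ 2 ≤ l * c ^ 2 * ∑ ω, w ω) :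
    ∑ ω ∈ univ.filter (fun ω => c < |f ω|), w ω ≤ l * ∑ ω, w ω := by
  have hS : 0 ≤ ∑ ω, w ω := sum_nonneg fun ω _ => hw ω
  have hterm : ∀ ω ∈ univ, 0 ≤ w ω * f ω ^ 2 := fun ω _ => mul_nonneg (hw ω) (sq_nonneg _)
  rcases hc.eq_or_lt with rfl | hc
  · have hzero := (sum_eq_zero_iff_of_nonneg hterm).mp
      (le_antisymm (by simpa using h) (sum_nonneg hterm))
    rw [sum_eq_zero fun ω hω => ?_]
    · positivity
    have hf : f ω ≠ 0 := abs_pos.mp (mem_filter.mp hω).2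
    simpa [hf] using hzero ω (mem_univ ω)
  · refine le_of_mul_le_mul_right ?_ (pow_pos hc 2)
    calc (∑ ω ∈ univ.filter (fun ω => c < |f ω|), w ω) * c ^ 2
        = ∑ ω ∈ univ.filter (fun ω => c < |f ω|), w ω * c ^ 2 := sum_mul ..
      _ ≤ ∑ ω ∈ univ.filter (fun ω => c < |f ω|), w ω * f ω ^ 2 :=
          sum_le_sum fun ω hω => mul_le_mul_of_nonneg_left
            (sq_le_sq.mpr ((abs_of_pos hc).le.trans (mem_filter.mp hω).2.le)) (hw ω)
      _ ≤ ∑ ω, w ω * f ω ^ 2 := sum_le_univ_sum_of_nonneg fun ω => hterm ω (mem_univ ω)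
      _ ≤ (l * ∑ ω, w ω) * c ^ 2 := by linarith

end WeightedMoments

theorem higher_ecs_concentration_general {Ω : Type*} [Fintype Ω] (μ X Y : Ω → ℝ)
    (hμ0 : ∀ ω, 0 ≤ μ ω)
    (hX : ∀ ω, 0 ≤ X ω)
    (t : ℕ) (ht : 2 ≤ t)
    {ε d : ℝ} (hε0 : 0 ≤ ε) (hd : 0 ≤ d)
    (hXY : |(∑ ω, μ ω * (X ω * Y ω)) - d * (∑ ω, μ ω * X ω)|
      ≤ ε * (d * (∑ ω, μ ω * X ω)))
    (hXYt : (∑ ω, μ ω * (X ω * Y ω ^ (2 ^ t))) ≤ (1 + ε) * d ^ (2 ^ t) * (∑ ω, μ ω * X ω)) :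
    (1 - 4 * ε ^ ((1 : ℝ) / 8)) * (∑ ω, μ ω * X ω)
      ≤ ∑ ω, μ ω * ((if |Y ω - d| ≤ 2 * ε ^ ((1 : ℝ) / 8) * d then (1 : ℝ) else 0) * X ω) := by
  set u := ε ^ ((1 : ℝ) / 8) with hu
  have hu0 : 0 ≤ u := Real.rpow_nonneg hε0 _
  have hεu : ε = u ^ 8 := by
    rw [hu, ← Real.rpow_natCast, ← Real.rpow_mul hε0]
    norm_num
  have hw : ∀ ω, 0 ≤ μ ω * X ω := fun ω => mul_nonneg (hμ0 ω) (hX ω)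
  simp only [← mul_assoc] at hXY hXYt
  have hsecond := sum_mul_pow_two_pow_le_of_le hw hε0 hd (by omega : 1 ≤ t) hXYt
  have hvar := sum_mul_sub_sq_le_s3 hd hXY (by simpa using hsecond)
  have htail : ∑ ω ∈ univ.filter (fun ω => 2 * u * d < |Y ω - d|), μ ω * X ω
      ≤ 3 / 4 * u ^ 6 * ∑ ω, μ ω * X ω :=
    sum_filter_lt_abs_le hw (by positivity) (by positivity) (by rw [hεu] at hvar; linarith)
  have hW : ∑ ω, μ ω * ((if |Y ω - d| ≤ 2 * u * d then (1 : ℝ) else 0) * X ω)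
      = ∑ ω ∈ univ.filter (fun ω => |Y ω - d| ≤ 2 * u * d), μ ω * X ω := by
    rw [sum_filter]
    exact sum_congr rfl fun ω _ => by split_ifs <;> ring
  have hsplit := sum_filter_add_sum_filter_not univ (fun ω => |Y ω - d| ≤ 2 * u * d)
    (fun ω => μ ω * X ω)
  simp only [not_le] at hsplit
  have hS : 0 ≤ ∑ ω, μ ω * X ω := sum_nonneg fun ω _ => hw ω
  have hR : 0 ≤ ∑ ω ∈ univ.filter (fun ω => |Y ω - d| ≤ 2 * u * d), μ ω * X ω :=
    sum_nonneg fun ω _ => hw ω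
  rw [hW]
  rcases le_total u 1 with hu1 | hu1
  · nlinarith [pow_le_of_le_one hu0 hu1 (by norm_num : 6 ≠ 0)]
  · nlinarith

/-- Corollary `higherECSconc`: on a finite probability space with
probability mass function `μ`, if `X ≥ 0`, `t ≥ 2`, `0 ≤ ε < 2^{2−2t}`,
`E[XY] = (1 ± ε)·d·E[X]` and `E[X·Y^{2^t}] ≤ (1+ε)·d^{2^t}·E[X]`, then letting `W` be
the indicator of `|Y − d| ≤ 2ε^{1/8}·d` we have `E[WX] ≥ (1 − 4ε^{1/8})·E[X]`. -/
theorem higher_ecs_concentration {Ω : Type*} [Fintype Ω] (μ X Y : Ω → ℝ)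
    (hμ0 : ∀ ω, 0 ≤ μ ω) (hμ1 : (∑ ω, μ ω) = 1)
    (hX : ∀ ω, 0 ≤ X ω)
    (t : ℕ) (ht : 2 ≤ t)
    {ε d : ℝ} (hε0 : 0 ≤ ε) (hε1 : ε < (2 : ℝ) ^ ((2 : ℝ) - 2 * (t : ℝ))) (hd : 0 ≤ d)
    (hXY : |(∑ ω, μ ω * (X ω * Y ω)) - d * (∑ ω, μ ω * X ω)|
      ≤ ε * (d * (∑ ω, μ ω * X ω)))
    (hXYt : (∑ ω, μ ω * (X ω * Y ω ^ (2 ^ t))) ≤ (1 + ε) * d ^ (2 ^ t) * (∑ ω, μ ω * X ω)) :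
    (1 - 4 * ε ^ ((1 : ℝ) / 8)) * (∑ ω, μ ω * X ω)
      ≤ ∑ ω, μ ω * ((if |Y ω - d| ≤ 2 * ε ^ ((1 : ℝ) / 8) * d then (1 : ℝ) else 0) * X ω) :=
  higher_ecs_concentration_general μ X Y hμ0 hX t ht hε0 hd hXY hXYt
end

section
/- Let k ≥ 2, let V₁, …, V_k be finite nonempty vertex sets, and let H be a weighted k-partite k-graph on these parts (a nonnegative weight function on crossing subsets). Fix an index i and vectors a, b, c ∈ {0,1,2}^k agreeing on all coordinates j ≠ i, with a_i = 0, b_i = 1, c_i = 2. Then H(Oct(c)) · H(Oct(a)) ≥ H(Oct(b))², where H(Oct(s)) denotes the expected weight of a uniformly random partite homomorphism from the octahedron complex Oct(s) to H. -/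
/-!
Splitting off part `i`, a copy of `Oct(s)` is a copy `y` of the octahedron on the other parts
together with `s i` independent vertices `v` of `V i`, each contributing the product
`linkWeight y v` of the weights of the edges through it. Hence `H(Oct(s))` is the moment
`𝔼_y [A(y) d(y)^(s i)]`, where `A = restWeight` and `d(y)` is the average of `linkWeight y` over
`V i`, and the claim is the weighted Cauchy–Schwarz inequality `(𝔼 A d)² ≤ 𝔼 A d² · 𝔼 A`
for the nonnegative weight `A`.
-/

/-- The octahedron count `H(Oct(s))` for a weighted `k`-partite `k`-graph with parts
`V j` and weight function `h` on crossing sets (encoded as partial tuples, `none`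
meaning the part is unused): choose `s j` vertices uniformly at random (with
replacement) from each part and take the expected product of `h` over all nonempty
crossing edges of the resulting octahedron. -/
noncomputable def octCount {k : ℕ} (V : Fin k → Type*) [∀ j, Fintype (V j)]
    (h : (∀ j, Option (V j)) → ℝ) (s : Fin k → ℕ) : ℝ :=
  (∑ x : ∀ j, Fin (s j) → V j,
      ∏ ω : ∀ j, Option (Fin (s j)),
        if ∀ j, ω j = none then 1 else h fun j => (ω j).map (x j)) /
    (Fintype.card (∀ j, Fin (s j) → V j) : ℝ)

theorem Equiv.forall_piSplitAt_symm_apply {α : Type*} [DecidableEq α] (i : α) {β : α → Type*}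
    (P : ∀ j, β j → Prop) (b : β i) (f : ∀ j : {j // j ≠ i}, β j) :
    (∀ j, P j ((piSplitAt i β).symm (b, f) j)) ↔ P i b ∧ ∀ j : {j // j ≠ i}, P j (f j) := by
  constructor
  · intro H
    refine ⟨by simpa using H i, fun j => by simpa [j.2] using H j⟩
  · rintro ⟨hi, hf⟩ j
    by_cases hj : j = i
    · subst hj; simpa using hi
    · simpa [hj] using hf ⟨j, hj⟩

namespace OctCount

variable {k : ℕ} {V : Fin k → Type*} (h : (∀ j, Option (V j)) → ℝ)

noncomputable def weight {s : Fin k → ℕ} (x : ∀ j, Fin (s j) → V j) : ℝ :=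
  ∏ ω : ∀ j, Option (Fin (s j)), if ∀ j, ω j = none then 1 else h fun j => (ω j).map (x j)

variable (i : Fin k) {r : {j // j ≠ i} → ℕ}

def edgeAt (o : Option (V i)) (y : ∀ j : {j // j ≠ i}, Fin (r j) → V j)
    (ω : ∀ j : {j // j ≠ i}, Option (Fin (r j))) : ∀ j, Option (V j) :=
  (Equiv.piSplitAt i fun j => Option (V j)).symm (o, fun j => (ω j).map (y j))

noncomputable def restWeight (y : ∀ j : {j // j ≠ i}, Fin (r j) → V j) : ℝ :=
  ∏ ω : ∀ j : {j // j ≠ i}, Option (Fin (r j)),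
    if ∀ j, ω j = none then 1 else h (edgeAt i none y ω)

noncomputable def linkWeight (y : ∀ j : {j // j ≠ i}, Fin (r j) → V j) (v : V i) : ℝ :=
  ∏ ω : ∀ j : {j // j ≠ i}, Option (Fin (r j)), h (edgeAt i (some v) y ω)

theorem map_piSplitAt_symm {s : Fin k → ℕ} (o : Option (Fin (s i)))
    (ω : ∀ j : {j // j ≠ i}, Option (Fin (s j))) (xi : Fin (s i) → V i)
    (y : ∀ j : {j // j ≠ i}, Fin (s j) → V j) :
    (fun j => ((Equiv.piSplitAt i fun j => Option (Fin (s j))).symm (o, ω) j).map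
        ((Equiv.piSplitAt i fun j => Fin (s j) → V j).symm (xi, y) j))
      = edgeAt i (o.map xi) y ω := by
  funext j
  by_cases hj : j = i
  · subst hj; simp [edgeAt]
  · simp [edgeAt, hj]

theorem weight_piSplitAt_symm {s : Fin k → ℕ} (xi : Fin (s i) → V i)
    (y : ∀ j : {j // j ≠ i}, Fin (s j) → V j) :
    weight h ((Equiv.piSplitAt i _).symm (xi, y))
      = restWeight h i y * ∏ t, linkWeight h i y (xi t) := by
  rw [weight, ← (Equiv.piSplitAt i _).symm.prod_comp, Fintype.prod_prod_type, Fintype.prod_option]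
  simp only [Equiv.forall_piSplitAt_symm_apply i (fun _ o => o = none), map_piSplitAt_symm]
  simp [restWeight, linkWeight, Option.map]

variable [∀ j, Fintype (V j)]

theorem sum_weight (s : Fin k → ℕ) :
    ∑ x : ∀ j, Fin (s j) → V j, weight h x
      = ∑ y : ∀ j : {j // j ≠ i}, Fin (s j) → V j,
          restWeight h i y * (∑ v, linkWeight h i y v) ^ s i := by
  rw [← (Equiv.piSplitAt i _).symm.sum_comp, Fintype.sum_prod_type, Finset.sum_comm]
  refine Finset.sum_congr rfl fun y _ => ?_
  simp only [weight_piSplitAt_symm, ← Finset.mul_sum, Fintype.sum_pow]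

theorem card_pi_fun (s : Fin k → ℕ) :
    Fintype.card (∀ j, Fin (s j) → V j)
      = Fintype.card (V i) ^ s i * Fintype.card (∀ j : {j // j ≠ i}, Fin (s j) → V j) := by
  rw [Fintype.card_congr (Equiv.piSplitAt i _), Fintype.card_prod, Fintype.card_fun,
    Fintype.card_fin]

variable (r) in
noncomputable def moment (m : ℕ) : ℝ :=
  (∑ y : ∀ j : {j // j ≠ i}, Fin (r j) → V j,
      restWeight h i y * ((∑ v, linkWeight h i y v) / Fintype.card (V i)) ^ m) /
    Fintype.card (∀ j : {j // j ≠ i}, Fin (r j) → V j)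

theorem octCount_eq_moment (s : Fin k → ℕ) :
    octCount V h s = moment h i (fun j => s j) (s i) := by
  rw [octCount, moment, card_pi_fun i s, Nat.cast_mul, Nat.cast_pow]
  change (∑ x, weight h x) / _ = _
  simp only [sum_weight h i s, div_pow, mul_div_assoc', ← Finset.sum_div, div_div]

omit [∀ j, Fintype (V j)] in
theorem restWeight_nonneg (hpos : ∀ e, 0 ≤ h e) (y : ∀ j : {j // j ≠ i}, Fin (r j) → V j) :
    0 ≤ restWeight h i y :=
  Finset.prod_nonneg fun _ _ => by split_ifs <;> simp [hpos]

theorem moment_one_sq_le (hpos : ∀ e, 0 ≤ h e) :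
    moment h i r 1 ^ 2 ≤ moment h i r 2 * moment h i r 0 := by
  simp only [moment, pow_one, pow_zero, mul_one]
  rw [div_pow, div_mul_div_comm, ← sq]
  refine div_le_div_of_nonneg_right ?_ (sq_nonneg _)
  rw [mul_comm]
  refine Finset.sum_sq_le_sum_mul_sum_of_sq_le_mul _ (fun y _ => restWeight_nonneg h i hpos y)
    (fun y _ => mul_nonneg (restWeight_nonneg h i hpos y) (sq_nonneg _)) fun y _ => ?_
  rw [mul_pow, sq (restWeight h i y), mul_assoc]

end OctCount

theorem cs_oct_lower_general {k : ℕ} (V : Fin k → Type*) [∀ j, Fintype (V j)]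
    (h : (∀ j, Option (V j)) → ℝ) (hpos : ∀ e, 0 ≤ h e)
    (i : Fin k) (a b c : Fin k → ℕ)
    (hagree : ∀ j, j ≠ i → a j = b j ∧ b j = c j)
    (ha : a i = 0) (hb : b i = 1) (hc : c i = 2) :
    octCount V h b ^ 2 ≤ octCount V h c * octCount V h a := by
  have hab : (fun j : {j // j ≠ i} => a j.1) = fun j => b j.1 :=
    funext fun j => (hagree j j.2).1
  have hcb : (fun j : {j // j ≠ i} => c j.1) = fun j => b j.1 :=
    funext fun j => (hagree j j.2).2.symm
  rw [OctCount.octCount_eq_moment h i a, OctCount.octCount_eq_moment h i b,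
    OctCount.octCount_eq_moment h i c, ha, hb, hc, hab, hcb]
  exact OctCount.moment_one_sq_le h i hpos

/-- Lemma `CSoctlow`: for `k ≥ 2`, a weighted `k`-partite `k`-graph `h`
with nonnegative weights, an index `i`, and vectors `a, b, c ∈ {0,1,2}^k` agreeing off
coordinate `i` with `a i = 0`, `b i = 1`, `c i = 2`, we have
`H(Oct(c))·H(Oct(a)) ≥ H(Oct(b))²`. -/
theorem cs_oct_lower {k : ℕ} (hk : 2 ≤ k) (V : Fin k → Type*) [∀ j, Fintype (V j)]
    [∀ j, Nonempty (V j)] (h : (∀ j, Option (V j)) → ℝ) (hpos : ∀ e, 0 ≤ h e)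
    (i : Fin k) (a b c : Fin k → ℕ) (hcr : ∀ j, c j ≤ 2)
    (hagree : ∀ j, j ≠ i → a j = b j ∧ b j = c j)
    (ha : a i = 0) (hb : b i = 1) (hc : c i = 2) :
    octCount V h b ^ 2 ≤ octCount V h c * octCount V h a :=
  cs_oct_lower_general V h hpos i a b c hagree ha hb hc
end

section
/- Let k ≥ 2 and let G and Γ be weighted k-partite k-graphs on the same vertex parts with g(e) = γ(e) for all crossing edges e of size less than k. Let s, s′ ∈ {1,2}^k with s ≥ s′ coordinatewise, and suppose s has exactly t more coordinates equal to 2 than s′. Suppose G(Oct(s′)) = d·Γ(Oct(s′)) for some d ≥ 0, and suppose Γ is η-minimal for some η ≥ 0. Then G(Oct(s)) ≥ (d^{2^t} / (1+η)^{2^t − 1}) · Γ(Oct(s)). -/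
open Finset

/-- A weighted `k`-partite `k`-graph `h` is `η`-minimal if for every index `i` and all
vectors `a, b, c ∈ {0,1,2}^k` agreeing off coordinate `i` with `a i = 0`, `b i = 1`,
`c i = 2`, we have `H(Oct(c))·H(Oct(a)) ≤ (1+η)·H(Oct(b))²`. -/
def IsMinimal {k : ℕ} (V : Fin k → Type*) [∀ j, Fintype (V j)]
    (h : (∀ j, Option (V j)) → ℝ) (η : ℝ) : Prop :=
  ∀ (i : Fin k) (a b c : Fin k → ℕ), (∀ j, c j ≤ 2) →
    (∀ j, j ≠ i → a j = b j ∧ b j = c j) → a i = 0 → b i = 1 → c i = 2 →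
    octCount V h c * octCount V h a ≤ (1 + η) * octCount V h b ^ 2

/-!
Fix a part `i` and let `s` have `s i = m`. Grouping the maps of `Oct(s)` by their restriction
`y` to the other parts gives `H(Oct(s)) = 𝔼_y L₀(y) · (𝔼_v L_v(y))^m`, where `L₀(y)` weighs
the crossing sets avoiding part `i` and `L_v(y)` those through the vertex `v` of part `i`.
Cauchy–Schwarz then gives `G(Oct(b))² ≤ G(Oct(a)) · G(Oct(c))` for `a, b, c` agreeing off `i`
with `a i = 0`, `b i = 1`, `c i = 2`, and `G(Oct(a)) = Γ(Oct(a))` because `Oct(a)` has no edge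
of size `k`. Together with `η`-minimality of `Γ`, density `d` at `b` becomes density
`d² / (1 + η)` at `c`; doubling the `t` coordinates one at a time yields `2^t` and `2^t - 1`.
-/

open scoped BigOperators

section Expectation

variable {α : Type*} [Fintype α]

lemma Fintype.expect_prod_comp_eq_pow {A W : Type*} [Fintype A] [DecidableEq A] [Fintype W]
    (F : W → ℝ) : 𝔼 p : A → W, ∏ r, F (p r) = (𝔼 v, F v) ^ Fintype.card A := by
  rw [Fintype.expect_eq_sum_div_card, Fintype.expect_eq_sum_div_card, div_pow,
    ← Fintype.prod_sum (fun (_ : A) v => F v), Finset.prod_const, Fintype.card_fun,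
    Nat.cast_pow, Finset.card_univ]

lemma sq_expect_mul_le {a : α → ℝ} (ha : ∀ i, 0 ≤ a i) (b : α → ℝ) :
    (𝔼 i, a i * b i) ^ 2 ≤ (𝔼 i, a i) * 𝔼 i, a i * b i ^ 2 := by
  simp only [Fintype.expect_eq_sum_div_card, div_pow, div_mul_div_comm, ← sq]
  gcongr
  exact Finset.sum_sq_le_sum_mul_sum_of_sq_le_mul _ (fun i _ => ha i)
    (fun i _ => mul_nonneg (ha i) (sq_nonneg (b i))) (fun i _ => le_of_eq (by ring))

lemma expect_mul_eq_zero_of_expect_eq_zero {a : α → ℝ} (ha : ∀ i, 0 ≤ a i) (h : 𝔼 i, a i = 0)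
    (b : α → ℝ) : 𝔼 i, a i * b i = 0 := by
  rw [Fintype.expect_eq_zero_iff_of_nonneg fun i => ha i] at h
  simp [h]

end Expectation

section PiSplitAt

variable {ι : Type*} [DecidableEq ι]

lemma Equiv.piSplitAt_symm_apply_self (i : ι) {β : ι → Type*}
    (f : β i × ∀ j : {j // j ≠ i}, β j) : (Equiv.piSplitAt i β).symm f i = f.1 :=
  congrArg Prod.fst ((Equiv.piSplitAt i β).apply_symm_apply f)

lemma Equiv.piSplitAt_symm_apply_of_ne (i : ι) {β : ι → Type*}
    (f : β i × ∀ j : {j // j ≠ i}, β j) (j : {j // j ≠ i}) :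
    (Equiv.piSplitAt i β).symm f j = f.2 j :=
  congrFun (congrArg Prod.snd ((Equiv.piSplitAt i β).apply_symm_apply f)) j

lemma Equiv.piSplitAt_symm_map (i : ι) {α β : ι → Type*} (φ : ∀ j, α j → β j)
    (f : α i × ∀ j : {j // j ≠ i}, α j) :
    (fun j => φ j ((Equiv.piSplitAt i α).symm f j)) =
      (Equiv.piSplitAt i β).symm (φ i f.1, fun j => φ j (f.2 j)) := by
  funext j
  by_cases hj : j = i
  · subst hj; simp
  · simp [hj]

end PiSplitAt

section HomWeight

variable {ι : Type*} [Fintype ι] [DecidableEq ι] {V : ι → Type*}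

noncomputable def homWeight (B : ι → Type*) [∀ j, Fintype (B j)]
    (f : (∀ j, Option (V j)) → ℝ) (x : ∀ j, B j → V j) : ℝ :=
  ∏ ω : ∀ j, Option (B j), f fun j => (ω j).map (x j)

lemma homWeight_nonneg {B : ι → Type*} [∀ j, Fintype (B j)] {f : (∀ j, Option (V j)) → ℝ}
    (hf : ∀ e, 0 ≤ f e) (x : ∀ j, B j → V j) : 0 ≤ homWeight B f x :=
  Finset.prod_nonneg fun _ _ => hf _

lemma homWeight_congr {B C : ι → Type*} [∀ j, Fintype (B j)] [∀ j, Fintype (C j)]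
    (e : ∀ j, B j ≃ C j) (f : (∀ j, Option (V j)) → ℝ) (y : ∀ j, C j → V j) :
    homWeight C f y = homWeight B f fun j => y j ∘ e j := by
  refine (Fintype.prod_equiv (Equiv.piCongrRight fun j => (e j).optionCongr) _ _ ?_).symm
  intro ω
  simp [Option.map_map]

/-- The weight of `y` in the link of the vertex `o` of part `i` (of the empty set if
`o = none`). -/
noncomputable def linkWeight (i : ι) (B : ι → Type*) [∀ j, Fintype (B j)]
    (f : (∀ j, Option (V j)) → ℝ) (o : Option (V i))
    (y : ∀ j : {j // j ≠ i}, B j → V j) : ℝ :=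
  homWeight (fun j : {j // j ≠ i} => B j)
    (fun e => f ((Equiv.piSplitAt i fun j => Option (V j)).symm (o, e))) y

lemma homWeight_piSplitAt_symm (i : ι) (B : ι → Type*) [∀ j, Fintype (B j)]
    (f : (∀ j, Option (V j)) → ℝ) (p : B i → V i) (y : ∀ j : {j // j ≠ i}, B j → V j) :
    homWeight B f ((Equiv.piSplitAt i fun j => B j → V j).symm (p, y)) =
      linkWeight i B f none y * ∏ r, linkWeight i B f (some (p r)) y := by
  rw [homWeight, ← (Equiv.piSplitAt i fun j => Option (B j)).symm.prod_comp,
    Fintype.prod_prod_type, Fintype.prod_option]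
  simp only [Equiv.piSplitAt_symm_map i fun j => Option.map _, Option.map_none, Option.map_some,
    Equiv.piSplitAt_symm_apply_self, Equiv.piSplitAt_symm_apply_of_ne]
  rfl

lemma expect_homWeight [∀ j, Fintype (V j)] (i : ι) (B : ι → Type*) [∀ j, Fintype (B j)]
    [∀ j, DecidableEq (B j)] (f : (∀ j, Option (V j)) → ℝ) :
    𝔼 x, homWeight B f x = 𝔼 y, linkWeight i B f none y *
      (𝔼 v, linkWeight i B f (some v) y) ^ Fintype.card (B i) := by
  rw [← Fintype.expect_equiv (Equiv.piSplitAt i fun j => B j → V j).symm _ _ fun _ => rfl,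
    ← Finset.univ_product_univ, Finset.expect_product, Finset.expect_comm]
  simp only [homWeight_piSplitAt_symm, ← Finset.mul_expect]
  refine Finset.expect_congr rfl fun y _ => ?_
  rw [Fintype.expect_prod_comp_eq_pow fun v => linkWeight i B f (some v) y]

lemma linkWeight_nonneg {i : ι} {B : ι → Type*} [∀ j, Fintype (B j)]
    {f : (∀ j, Option (V j)) → ℝ} (hf : ∀ e, 0 ≤ f e) {o : Option (V i)}
    (y : ∀ j : {j // j ≠ i}, B j → V j) : 0 ≤ linkWeight i B f o y :=
  homWeight_nonneg (V := fun j : {j // j ≠ i} => V j) (fun _ => hf _) y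

lemma linkWeight_congr (i : ι) {B C : ι → Type*} [∀ j, Fintype (B j)] [∀ j, Fintype (C j)]
    (e : ∀ j : {j // j ≠ i}, B j ≃ C j) (f : (∀ j, Option (V j)) → ℝ) (o : Option (V i))
    (y : ∀ j : {j // j ≠ i}, C j → V j) :
    linkWeight i C f o y = linkWeight i B f o fun j => y j ∘ e j :=
  homWeight_congr e _ y

end HomWeight

section Octahedron

variable {k : ℕ} {V : Fin k → Type*}

def oneOnEmpty (h : (∀ j, Option (V j)) → ℝ) (e : ∀ j, Option (V j)) : ℝ :=
  if ∀ j, e j = none then 1 else h e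

lemma oneOnEmpty_nonneg {h : (∀ j, Option (V j)) → ℝ} (h0 : ∀ e, 0 ≤ h e)
    (e : ∀ j, Option (V j)) : 0 ≤ oneOnEmpty h e := by
  unfold oneOnEmpty
  split_ifs
  exacts [zero_le_one, h0 e]

variable [∀ j, Fintype (V j)]

lemma octCount_eq_expect (h : (∀ j, Option (V j)) → ℝ) (s : Fin k → ℕ) :
    octCount V h s = 𝔼 x, homWeight (fun j => Fin (s j)) (oneOnEmpty h) x := by
  rw [octCount, Fintype.expect_eq_sum_div_card]
  congr with x
  refine Finset.prod_congr rfl fun ω _ => ?_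
  simp [oneOnEmpty]

lemma octCount_eq_expect_linkWeight (h : (∀ j, Option (V j)) → ℝ) (i : Fin k)
    {n s : Fin k → ℕ} (hns : ∀ j ≠ i, n j = s j) :
    octCount V h n = 𝔼 y, linkWeight i (fun j => Fin (s j)) (oneOnEmpty h) none y *
      (𝔼 v, linkWeight i (fun j => Fin (s j)) (oneOnEmpty h) (some v) y) ^ n i := by
  let e : ∀ j : {j // j ≠ i}, Fin (s j) ≃ Fin (n j) := fun j => finCongr (hns j j.2).symm
  rw [octCount_eq_expect, expect_homWeight i, Fintype.card_fin]
  refine (Fintype.expect_equiv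
    (Equiv.piCongrRight fun j => (e j).arrowCongr (Equiv.refl (V j))) _ _ fun y => ?_).symm
  have hy : (fun j => (Equiv.piCongrRight fun j => (e j).arrowCongr (Equiv.refl (V j))) y j ∘ e j)
      = y := by
    ext j r; simp
  simp only [linkWeight_congr i (B := fun j => Fin (s j)) (C := fun j => Fin (n j)) e, hy]

lemma octCount_nonneg {h : (∀ j, Option (V j)) → ℝ} (h0 : ∀ e, 0 ≤ h e) (s : Fin k → ℕ) :
    0 ≤ octCount V h s := by
  rw [octCount_eq_expect]
  exact Finset.expect_nonneg fun x _ => homWeight_nonneg (oneOnEmpty_nonneg h0) x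

lemma octCount_congr_of_eq_zero {g γ : (∀ j, Option (V j)) → ℝ}
    (hagree : ∀ e : ∀ j, Option (V j), (∃ j, e j = none) → g e = γ e)
    {a : Fin k → ℕ} {i : Fin k} (ha : a i = 0) : octCount V g a = octCount V γ a := by
  simp only [octCount_eq_expect]
  refine Finset.expect_congr rfl fun x _ => Finset.prod_congr rfl fun ω _ => ?_
  have hω : ω i = none := by
    cases hωi : ω i with
    | none => rfl
    | some r => exact absurd r.isLt (by omega)
  unfold oneOnEmpty
  rw [hagree _ ⟨i, by simp [hω]⟩]

variable {h : (∀ j, Option (V j)) → ℝ} {a b c : Fin k → ℕ} {i : Fin k}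

lemma octCount_sq_le_mul (h0 : ∀ e, 0 ≤ h e) (habc : ∀ j ≠ i, a j = b j ∧ b j = c j)
    (ha : a i = 0) (hb : b i = 1) (hc : c i = 2) :
    octCount V h b ^ 2 ≤ octCount V h a * octCount V h c := by
  rw [octCount_eq_expect_linkWeight h i fun j hj => (habc j hj).1,
    octCount_eq_expect_linkWeight h i fun j hj => ((habc j hj).2).symm,
    octCount_eq_expect_linkWeight h i fun _ _ => rfl, ha, hb, hc]
  simp only [pow_zero, mul_one, pow_one]
  exact sq_expect_mul_le (fun _ => linkWeight_nonneg (oneOnEmpty_nonneg h0) _) _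

lemma octCount_eq_zero_of_eq_zero (h0 : ∀ e, 0 ≤ h e) (hac : ∀ j ≠ i, c j = a j) (ha : a i = 0)
    (hza : octCount V h a = 0) : octCount V h c = 0 := by
  rw [octCount_eq_expect_linkWeight h i hac]
  rw [octCount_eq_expect_linkWeight h i fun _ _ => rfl, ha] at hza
  simp only [pow_zero, mul_one] at hza
  exact expect_mul_eq_zero_of_expect_eq_zero (fun _ => linkWeight_nonneg (oneOnEmpty_nonneg h0) _)
    hza _

lemma sq_div_mul_octCount_le {g γ : (∀ j, Option (V j)) → ℝ} (hg0 : ∀ e, 0 ≤ g e)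
    (hγ0 : ∀ e, 0 ≤ γ e) (hagree : ∀ e : ∀ j, Option (V j), (∃ j, e j = none) → g e = γ e)
    {η : ℝ} (hη : 0 ≤ η) (hmin : IsMinimal V γ η) (hc2 : ∀ j, c j ≤ 2)
    (habc : ∀ j ≠ i, a j = b j ∧ b j = c j) (ha : a i = 0) (hb : b i = 1) (hc : c i = 2)
    {d : ℝ} (hd : 0 ≤ d) (hdb : d * octCount V γ b ≤ octCount V g b) :
    d ^ 2 / (1 + η) * octCount V γ c ≤ octCount V g c := by
  have hac : ∀ j ≠ i, c j = a j := fun j hj => ((habc j hj).1.trans (habc j hj).2).symm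
  rcases (octCount_nonneg hγ0 a).eq_or_lt with hγa | hγa
  · rw [octCount_eq_zero_of_eq_zero hγ0 hac ha hγa.symm, mul_zero]
    exact octCount_nonneg hg0 c
  have hcs : octCount V g b ^ 2 ≤ octCount V γ a * octCount V g c :=
    octCount_congr_of_eq_zero hagree ha ▸ octCount_sq_le_mul hg0 habc ha hb hc
  have hsq : (d * octCount V γ b) ^ 2 ≤ octCount V g b ^ 2 :=
    pow_le_pow_left₀ (mul_nonneg hd (octCount_nonneg hγ0 b)) hdb 2
  rw [div_mul_eq_mul_div, div_le_iff₀ (by positivity)]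
  refine le_of_mul_le_mul_right ?_ hγa
  calc d ^ 2 * octCount V γ c * octCount V γ a
      = d ^ 2 * (octCount V γ c * octCount V γ a) := by ring
    _ ≤ d ^ 2 * ((1 + η) * octCount V γ b ^ 2) :=
      mul_le_mul_of_nonneg_left (hmin i a b c hc2 habc ha hb hc) (sq_nonneg d)
    _ = (1 + η) * (d * octCount V γ b) ^ 2 := by ring
    _ ≤ (1 + η) * (octCount V γ a * octCount V g c) := by gcongr; exact hsq.trans hcs
    _ = octCount V g c * (1 + η) * octCount V γ a := by ring

end Octahedron

section CountingTwos

variable {ι : Type*} [Fintype ι] {s s' : ι → ℕ}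

lemma filter_eq_two_subset (hs : ∀ j, s j ≤ 2) (hle : ∀ j, s' j ≤ s j) :
    univ.filter (fun j => s' j = 2) ⊆ univ.filter (fun j => s j = 2) := by
  intro j
  simp only [mem_filter, mem_univ, true_and]
  have := hs j; have := hle j
  omega

lemma eq_of_card_filter_eq_two_eq (hs : ∀ j, 1 ≤ s j ∧ s j ≤ 2) (hs' : ∀ j, 1 ≤ s' j)
    (hle : ∀ j, s' j ≤ s j)
    (hcard : #(univ.filter fun j => s j = 2) = #(univ.filter fun j => s' j = 2)) : s = s' := by
  have htwos := eq_of_subset_of_card_le (filter_eq_two_subset (fun j => (hs j).2) hle) hcard.le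
  funext j
  have hj : s' j = 2 ↔ s j = 2 := by simpa using congrArg (j ∈ ·) htwos
  have := hs j; have := hs' j; have := hle j
  omega

lemma exists_eq_one_and_eq_two (hs' : ∀ j, 1 ≤ s' j) (hle : ∀ j, s' j ≤ s j)
    (hcard : #(univ.filter fun j => s' j = 2) < #(univ.filter fun j => s j = 2)) :
    ∃ i, s' i = 1 ∧ s i = 2 := by
  obtain ⟨i, hi, hi'⟩ := exists_mem_notMem_of_card_lt_card hcard
  simp only [mem_filter, mem_univ, true_and] at hi hi'
  have := hs' i; have := hle i
  exact ⟨i, by omega, hi⟩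

lemma card_filter_update_eq_two [DecidableEq ι] {i : ι} (hi : s' i ≠ 2) :
    #(univ.filter fun j => Function.update s' i 2 j = 2) =
      #(univ.filter fun j => s' j = 2) + 1 := by
  rw [← card_insert_of_notMem (s := univ.filter fun j => s' j = 2) (a := i) (by simpa using hi)]
  congr 1
  ext j
  by_cases hj : j = i <;> simp [hj]

end CountingTwos

lemma sq_div_pow_div_pow (d x : ℝ) (t : ℕ) :
    (d ^ 2 / x) ^ 2 ^ t / x ^ (2 ^ t - 1) = d ^ 2 ^ (t + 1) / x ^ (2 ^ (t + 1) - 1) := by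
  have h2t : 0 < 2 ^ t := Nat.two_pow_pos t
  rw [div_pow, ← pow_mul, div_div, ← pow_add, pow_succ', show 2 ^ t + (2 ^ t - 1) = 2 * 2 ^ t - 1
    by omega]

theorem pow_div_mul_octCount_le {k : ℕ} {V : Fin k → Type*} [∀ j, Fintype (V j)]
    {g γ : (∀ j, Option (V j)) → ℝ} (hg0 : ∀ e, 0 ≤ g e) (hγ0 : ∀ e, 0 ≤ γ e)
    (hagree : ∀ e : ∀ j, Option (V j), (∃ j, e j = none) → g e = γ e)
    {η : ℝ} (hη : 0 ≤ η) (hmin : IsMinimal V γ η) (t : ℕ) {s s' : Fin k → ℕ} {d : ℝ}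
    (hd : 0 ≤ d) (hs : ∀ j, 1 ≤ s j ∧ s j ≤ 2) (hs' : ∀ j, 1 ≤ s' j ∧ s' j ≤ 2)
    (hle : ∀ j, s' j ≤ s j)
    (ht : #(univ.filter fun j => s j = 2) = #(univ.filter fun j => s' j = 2) + t)
    (hds' : d * octCount V γ s' ≤ octCount V g s') :
    d ^ 2 ^ t / (1 + η) ^ (2 ^ t - 1) * octCount V γ s ≤ octCount V g s := by
  induction t generalizing s' d with
  | zero =>
    rw [eq_of_card_filter_eq_two_eq hs (fun j => (hs' j).1) hle ht]
    simpa using hds'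
  | succ t ih =>
    obtain ⟨i, hs'i, hsi⟩ :=
      exists_eq_one_and_eq_two (fun j => (hs' j).1) hle (by omega)
    have hupdate : ∀ j ≠ i, Function.update s' i 0 j = s' j ∧ s' j = Function.update s' i 2 j :=
      fun j hj => by simp [Function.update_of_ne hj]
    have hstep := sq_div_mul_octCount_le hg0 hγ0 hagree hη hmin
      (fun j => by by_cases hj : j = i <;> simp [hj, (hs' j).2]) hupdate
      (by simp) hs'i (by simp) hd hds'
    rw [← sq_div_pow_div_pow]
    refine ih (div_nonneg (sq_nonneg d) (by linarith)) (fun j => ?_) (fun j => ?_) ?_ hstep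
    · by_cases hj : j = i <;> simp [hj, hs' j]
    · by_cases hj : j = i <;> simp [hj, hsi, hle j]
    · rw [card_filter_update_eq_two (by omega)]
      omega

theorem rel_cs_oct_lower_general {k : ℕ} (V : Fin k → Type*) [∀ j, Fintype (V j)]
    (g γ : (∀ j, Option (V j)) → ℝ) (hg0 : ∀ e, 0 ≤ g e) (hγ0 : ∀ e, 0 ≤ γ e)
    (hagree : ∀ e : ∀ j, Option (V j), (∃ j, e j = none) → g e = γ e)
    (s s' : Fin k → ℕ) (hs : ∀ j, 1 ≤ s j ∧ s j ≤ 2) (hs' : ∀ j, 1 ≤ s' j ∧ s' j ≤ 2)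
    (hle : ∀ j, s' j ≤ s j) (t : ℕ)
    (ht : (Finset.univ.filter fun j => s j = 2).card
        = (Finset.univ.filter fun j => s' j = 2).card + t)
    (d η : ℝ) (hd : 0 ≤ d) (hη : 0 ≤ η)
    (hdens : octCount V g s' = d * octCount V γ s')
    (hmin : IsMinimal V γ η) :
    d ^ (2 ^ t) / (1 + η) ^ (2 ^ t - 1) * octCount V γ s ≤ octCount V g s :=
  pow_div_mul_octCount_le hg0 hγ0 hagree hη hmin t hd hs hs' hle ht hdens.ge

/-- Corollary `relCSoctlow`: if `G` and `Γ` are weighted `k`-partite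
`k`-graphs agreeing on all edges of size less than `k`, `s ≥ s′` are vectors in `{1,2}^k`
with `s` having exactly `t` more `2`-entries than `s′`, `G(Oct(s′)) = d·Γ(Oct(s′))`, and
`Γ` is `η`-minimal, then `G(Oct(s)) ≥ (d^{2^t}/(1+η)^{2^t−1})·Γ(Oct(s))`. -/
theorem rel_cs_oct_lower {k : ℕ} (hk : 2 ≤ k) (V : Fin k → Type*) [∀ j, Fintype (V j)]
    [∀ j, Nonempty (V j)]
    (g γ : (∀ j, Option (V j)) → ℝ) (hg0 : ∀ e, 0 ≤ g e) (hγ0 : ∀ e, 0 ≤ γ e)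
    (hagree : ∀ e : ∀ j, Option (V j), (∃ j, e j = none) → g e = γ e)
    (s s' : Fin k → ℕ) (hs : ∀ j, 1 ≤ s j ∧ s j ≤ 2) (hs' : ∀ j, 1 ≤ s' j ∧ s' j ≤ 2)
    (hle : ∀ j, s' j ≤ s j) (t : ℕ)
    (ht : (Finset.univ.filter fun j => s j = 2).card
        = (Finset.univ.filter fun j => s' j = 2).card + t)
    (d η : ℝ) (hd : 0 ≤ d) (hη : 0 ≤ η)
    (hdens : octCount V g s' = d * octCount V γ s')
    (hmin : IsMinimal V γ η) :
    d ^ (2 ^ t) / (1 + η) ^ (2 ^ t - 1) * octCount V γ s ≤ octCount V g s :=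
  rel_cs_oct_lower_general V g γ hg0 hγ0 hagree s s' hs hs' hle t ht d η hd hη hdens hmin
end

section
/- Let X, Y, Z be pairwise disjoint vertex sets of size n in a graph G, such that each of the three bipartite graphs induced by the pairs (X,Y), (X,Z), (Y,Z) is ε-regular with density d in Szemerédi's sense, where 0 < ε < d/2 ≤ 1/2. Then the number of triangles with one vertex in each of X, Y, Z is d³n³ up to an additive error of at most ξ·n³, where ξ = 50ε/d² suffices. -/
/-!
The triangles through `x ∈ X` are the edges between its neighbourhoods `N_Y(x)` and `N_Z(x)`.
By regularity of `(X, Y)` and `(X, Z)`, all but at most `4εn` vertices `x` are typical: they have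
`(d ± ε)n` neighbours in each of `Y` and `Z`. As `ε < d/2`, both neighbourhoods of a typical
vertex have at least `εn` vertices, so regularity of `(Y, Z)` gives `d³n² ± 3εn²` edges between
them. An atypical vertex is off by at most `n²`, so the total error is `7εn³ ≤ 50εn³/d²`.
-/

open Finset

/-- Szemerédi `ε`-regularity with density `d` of the bipartite graph of `G` between the
finite vertex sets `A` and `B`. -/
def EpsReg {V : Type*} [Fintype V] [DecidableEq V] (G : SimpleGraph V)
    [DecidableRel G.Adj] (ε d : ℝ) (A B : Finset V) : Prop :=
  ∀ A' ⊆ A, ∀ B' ⊆ B, ε * A.card ≤ A'.card → ε * B.card ≤ B'.card →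
    |((G.interedges A' B').card : ℝ) - d * A'.card * B'.card| ≤ ε * A'.card * B'.card

lemma abs_sub_cube_mul_le_of_abs_sub_le {t a b d ε m n : ℝ} (hd0 : 0 ≤ d) (hd1 : d ≤ 1)
    (hε : 0 ≤ ε) (ha0 : 0 ≤ a) (ham : a ≤ m) (hb0 : 0 ≤ b) (hbn : b ≤ n)
    (ha : |a - d * m| ≤ ε * m) (hb : |b - d * n| ≤ ε * n)
    (ht : |t - d * a * b| ≤ ε * a * b) :
    |t - d ^ 3 * m * n| ≤ 3 * ε * m * n := by
  have hm : 0 ≤ m := ha0.trans ham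
  have hn : 0 ≤ n := hb0.trans hbn
  have hab : |a * b - d ^ 2 * m * n| ≤ 2 * ε * m * n := calc
    |a * b - d ^ 2 * m * n| = |a * (b - d * n) + d * n * (a - d * m)| := by ring_nf
    _ ≤ a * |b - d * n| + d * n * |a - d * m| := by
      refine (abs_add_le _ _).trans_eq ?_
      rw [abs_mul, abs_mul, abs_of_nonneg ha0, abs_of_nonneg (mul_nonneg hd0 hn)]
    _ ≤ m * (ε * n) + 1 * n * (ε * m) := by gcongr
    _ = 2 * ε * m * n := by ring
  calc |t - d ^ 3 * m * n| = |(t - d * a * b) + d * (a * b - d ^ 2 * m * n)| := by ring_nf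
    _ ≤ |t - d * a * b| + d * |a * b - d ^ 2 * m * n| := by
      refine (abs_add_le _ _).trans_eq ?_
      rw [abs_mul, abs_of_nonneg hd0]
    _ ≤ ε * m * n + 1 * (2 * ε * m * n) := by gcongr; exact ht.trans (by gcongr)
    _ = 3 * ε * m * n := by ring

lemma Finset.abs_sum_le_card_mul_add_card_filter_not_mul {ι R : Type*}
    [CommRing R] [LinearOrder R] [IsOrderedRing R] (s : Finset ι) (p : ι → Prop)
    [DecidablePred p] (f : ι → R) {α β : R} (hα : 0 ≤ α)
    (hp : ∀ x ∈ s, p x → |f x| ≤ α) (hs : ∀ x ∈ s, |f x| ≤ β) :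
    |∑ x ∈ s, f x| ≤ #s * α + #{x ∈ s | ¬ p x} * β := by
  have hgood : ∑ x ∈ s with p x, |f x| ≤ #s * α := calc
    _ ≤ #{x ∈ s | p x} • α :=
      sum_le_card_nsmul _ _ _ fun x hx => hp x (mem_filter.1 hx).1 (mem_filter.1 hx).2
    _ ≤ #s * α := by
      rw [nsmul_eq_mul]; gcongr; exact filter_subset p s
  have hbad : ∑ x ∈ s with ¬ p x, |f x| ≤ #{x ∈ s | ¬ p x} * β := by
    rw [← nsmul_eq_mul]
    exact sum_le_card_nsmul _ _ _ fun x hx => hs x (mem_filter.1 hx).1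
  calc |∑ x ∈ s, f x| ≤ ∑ x ∈ s, |f x| := abs_sum_le_sum_abs _ _
    _ = ∑ x ∈ s with p x, |f x| + ∑ x ∈ s with ¬ p x, |f x| :=
      (sum_filter_add_sum_filter_not _ _ _).symm
    _ ≤ _ := add_le_add hgood hbad

namespace SimpleGraph

variable {V : Type*} (G : SimpleGraph V) [DecidableRel G.Adj]

lemma card_interedges_eq_sum_card_filter_adj (A B : Finset V) :
    #(G.interedges A B) = ∑ x ∈ A, #{y ∈ B | G.Adj x y} := by
  simp only [interedges_def, card_filter, sum_product]

lemma card_triangles_eq_sum_card_interedges (X Y Z : Finset V) :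
    #{p ∈ (X ×ˢ Y) ×ˢ Z | G.Adj p.1.1 p.1.2 ∧ G.Adj p.1.1 p.2 ∧ G.Adj p.1.2 p.2} =
      ∑ x ∈ X, #(G.interedges {y ∈ Y | G.Adj x y} {z ∈ Z | G.Adj x z}) := by
  simp only [card_filter, sum_product, interedges_def, sum_filter]
  refine sum_congr rfl fun x _ => sum_congr rfl fun y _ => ?_
  by_cases hxy : G.Adj x y <;> simp [hxy, ite_and]

lemma abs_card_interedges_sub_mul_le {d : ℝ} (hd0 : 0 ≤ d) (hd1 : d ≤ 1)
    {B' B C' C : Finset V} (hB : B' ⊆ B) (hC : C' ⊆ C) :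
    |(#(G.interedges B' C') : ℝ) - d * #B * #C| ≤ #B * #C := by
  refine abs_sub_le_of_nonneg_of_le (Nat.cast_nonneg _) ?_ (by positivity) ?_
  · exact_mod_cast (G.card_interedges_le_mul B' C').trans
      (Nat.mul_le_mul (card_le_card hB) (card_le_card hC))
  · rw [mul_assoc]
    exact mul_le_of_le_one_left (by positivity) hd1

def IsTypical (ε d : ℝ) (B : Finset V) (x : V) : Prop :=
  |(#{y ∈ B | G.Adj x y} : ℝ) - d * #B| ≤ ε * #B

noncomputable instance (ε d : ℝ) (B : Finset V) : DecidablePred (G.IsTypical ε d B) :=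
  fun _ => inferInstanceAs (Decidable (_ ≤ _))

end SimpleGraph

namespace EpsReg

variable {V : Type*} [Fintype V] [DecidableEq V] {G : SimpleGraph V} [DecidableRel G.Adj]
  {ε d : ℝ} {A B C : Finset V}

lemma abs_sum_card_filter_adj_sub_le (h : EpsReg G ε d A B) (hε : ε ≤ 1) {S : Finset V}
    (hSA : S ⊆ A) (hS : ε * #A ≤ #S) :
    |∑ x ∈ S, (#{y ∈ B | G.Adj x y} : ℝ) - d * #S * #B| ≤ ε * #S * #B := by
  have hB : ε * #B ≤ #B := mul_le_of_le_one_left (Nat.cast_nonneg _) hε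
  simpa [G.card_interedges_eq_sum_card_filter_adj] using h S hSA B subset_rfl hS hB

lemma card_filter_card_adj_lt_le (h : EpsReg G ε d A B) (hε0 : 0 ≤ ε) (hε1 : ε ≤ 1) :
    (#{x ∈ A | (#{y ∈ B | G.Adj x y} : ℝ) < (d - ε) * #B} : ℝ) ≤ ε * #A := by
  set S := {x ∈ A | (#{y ∈ B | G.Adj x y} : ℝ) < (d - ε) * #B}
  by_contra! hS
  have hne : S.Nonempty := card_pos.1 (mod_cast (by positivity : 0 ≤ ε * #A).trans_lt hS)
  have hlt : ∑ x ∈ S, (#{y ∈ B | G.Adj x y} : ℝ) < #S * ((d - ε) * #B) := by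
    rw [← nsmul_eq_mul, ← sum_const]
    exact sum_lt_sum_of_nonempty hne fun x hx => (mem_filter.1 hx).2
  have := abs_le.1 (h.abs_sum_card_filter_adj_sub_le hε1 (filter_subset _ _) hS.le)
  linarith

lemma card_filter_lt_card_adj_le (h : EpsReg G ε d A B) (hε0 : 0 ≤ ε) (hε1 : ε ≤ 1) :
    (#{x ∈ A | (d + ε) * #B < (#{y ∈ B | G.Adj x y} : ℝ)} : ℝ) ≤ ε * #A := by
  set S := {x ∈ A | (d + ε) * #B < (#{y ∈ B | G.Adj x y} : ℝ)}
  by_contra! hS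
  have hne : S.Nonempty := card_pos.1 (mod_cast (by positivity : 0 ≤ ε * #A).trans_lt hS)
  have hlt : #S * ((d + ε) * #B) < ∑ x ∈ S, (#{y ∈ B | G.Adj x y} : ℝ) := by
    rw [← nsmul_eq_mul, ← sum_const]
    exact sum_lt_sum_of_nonempty hne fun x hx => (mem_filter.1 hx).2
  have := abs_le.1 (h.abs_sum_card_filter_adj_sub_le hε1 (filter_subset _ _) hS.le)
  linarith

lemma card_filter_not_isTypical_le (h : EpsReg G ε d A B) (hε0 : 0 ≤ ε) (hε1 : ε ≤ 1) :
    (#{x ∈ A | ¬ G.IsTypical ε d B x} : ℝ) ≤ 2 * ε * #A := by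
  have hsub : {x ∈ A | ¬ G.IsTypical ε d B x} ⊆
      {x ∈ A | (#{y ∈ B | G.Adj x y} : ℝ) < (d - ε) * #B} ∪
        {x ∈ A | (d + ε) * #B < (#{y ∈ B | G.Adj x y} : ℝ)} := by
    intro x hx
    simp only [SimpleGraph.IsTypical, mem_filter, mem_union, not_le, lt_abs] at hx ⊢
    rcases hx with ⟨hxA, hx | hx⟩
    · exact .inr ⟨hxA, by linarith⟩
    · exact .inl ⟨hxA, by linarith⟩
  calc _ ≤ (#{x ∈ A | (#{y ∈ B | G.Adj x y} : ℝ) < (d - ε) * #B} : ℝ) +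
        #{x ∈ A | (d + ε) * #B < (#{y ∈ B | G.Adj x y} : ℝ)} :=
        mod_cast (card_le_card hsub).trans (card_union_le _ _)
    _ ≤ ε * #A + ε * #A :=
      add_le_add (h.card_filter_card_adj_lt_le hε0 hε1) (h.card_filter_lt_card_adj_le hε0 hε1)
    _ = 2 * ε * #A := by ring

lemma card_filter_not_isTypical_and_le (hB : EpsReg G ε d A B) (hC : EpsReg G ε d A C)
    (hε0 : 0 ≤ ε) (hε1 : ε ≤ 1) :
    (#{x ∈ A | ¬ (G.IsTypical ε d B x ∧ G.IsTypical ε d C x)} : ℝ) ≤ 4 * ε * #A := by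
  have hsub : {x ∈ A | ¬ (G.IsTypical ε d B x ∧ G.IsTypical ε d C x)} ⊆
      {x ∈ A | ¬ G.IsTypical ε d B x} ∪ {x ∈ A | ¬ G.IsTypical ε d C x} := by
    intro x
    simp only [mem_filter, mem_union, not_and_or]
    tauto
  calc _ ≤ (#{x ∈ A | ¬ G.IsTypical ε d B x} : ℝ) + #{x ∈ A | ¬ G.IsTypical ε d C x} :=
        mod_cast (card_le_card hsub).trans (card_union_le _ _)
    _ ≤ 2 * ε * #A + 2 * ε * #A := add_le_add
      (hB.card_filter_not_isTypical_le hε0 hε1) (hC.card_filter_not_isTypical_le hε0 hε1)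
    _ = 4 * ε * #A := by ring

lemma abs_card_interedges_filter_adj_sub_le (h : EpsReg G ε d B C) (hε0 : 0 ≤ ε)
    (hεd : 2 * ε ≤ d) (hd1 : d ≤ 1) {x : V} (hxB : G.IsTypical ε d B x)
    (hxC : G.IsTypical ε d C x) :
    |(#(G.interedges {y ∈ B | G.Adj x y} {z ∈ C | G.Adj x z}) : ℝ) - d ^ 3 * #B * #C| ≤
      3 * ε * #B * #C := by
  have hB : ε * #B ≤ #{y ∈ B | G.Adj x y} := by
    nlinarith [abs_le.1 hxB, mul_nonneg (sub_nonneg.2 hεd) (Nat.cast_nonneg (α := ℝ) #B)]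
  have hC : ε * #C ≤ #{z ∈ C | G.Adj x z} := by
    nlinarith [abs_le.1 hxC, mul_nonneg (sub_nonneg.2 hεd) (Nat.cast_nonneg (α := ℝ) #C)]
  exact abs_sub_cube_mul_le_of_abs_sub_le (by linarith) hd1 hε0 (Nat.cast_nonneg _)
    (mod_cast card_filter_le _ _) (Nat.cast_nonneg _) (mod_cast card_filter_le _ _) hxB hxC
    (h _ (filter_subset _ _) _ (filter_subset _ _) hB hC)

end EpsReg

theorem triangle_counting_general {V : Type*} [Fintype V] [DecidableEq V]
    (G : SimpleGraph V) [DecidableRel G.Adj]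
    (X Y Z : Finset V) (n : ℕ)
    (hX : X.card = n) (hY : Y.card = n) (hZ : Z.card = n)
    (ε d : ℝ) (hε0 : 0 < ε) (hεd : ε < d / 2) (hd1 : d / 2 ≤ 1 / 2)
    (hregXY : EpsReg G ε d X Y) (hregXZ : EpsReg G ε d X Z) (hregYZ : EpsReg G ε d Y Z) :
    |(((((X ×ˢ Y) ×ˢ Z).filter fun p =>
          G.Adj p.1.1 p.1.2 ∧ G.Adj p.1.1 p.2 ∧ G.Adj p.1.2 p.2).card : ℝ))
        - d ^ 3 * (n : ℝ) ^ 3|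
      ≤ (50 * ε / d ^ 2) * (n : ℝ) ^ 3 := by
  have hd0 : 0 < d := by linarith
  have hd_le_one : d ≤ 1 := by linarith
  have hε1 : ε ≤ 1 := by linarith
  set f : V → ℝ := fun x =>
    #(G.interedges {y ∈ Y | G.Adj x y} {z ∈ Z | G.Adj x z}) - d ^ 3 * #Y * #Z
  have hcount : ((((X ×ˢ Y) ×ˢ Z).filter fun p =>
        G.Adj p.1.1 p.1.2 ∧ G.Adj p.1.1 p.2 ∧ G.Adj p.1.2 p.2).card : ℝ) - d ^ 3 * (n : ℝ) ^ 3 =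
      ∑ x ∈ X, f x := by
    rw [G.card_triangles_eq_sum_card_interedges, Nat.cast_sum, sum_sub_distrib, sum_const,
      nsmul_eq_mul, hX, hY, hZ]
    ring
  have hatypical := hregXY.card_filter_not_isTypical_and_le hregXZ hε0.le hε1
  rw [hcount]
  calc |∑ x ∈ X, f x|
      ≤ #X * (3 * ε * #Y * #Z) +
          #{x ∈ X | ¬ (G.IsTypical ε d Y x ∧ G.IsTypical ε d Z x)} * (#Y * #Z) :=
        abs_sum_le_card_mul_add_card_filter_not_mul X _ f (by positivity)
          (fun _ _ hx => hregYZ.abs_card_interedges_filter_adj_sub_le hε0.le (by linarith)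
            hd_le_one hx.1 hx.2)
          (fun _ _ => G.abs_card_interedges_sub_mul_le (pow_nonneg hd0.le 3)
            (pow_le_one₀ hd0.le hd_le_one) (filter_subset _ _) (filter_subset _ _))
    _ ≤ n * (3 * ε * n * n) + 4 * ε * n * (n * n) := by
        rw [hX] at hatypical
        rw [hX, hY, hZ]
        gcongr
    _ = 7 * ε * (n : ℝ) ^ 3 := by ring
    _ ≤ (50 * ε / d ^ 2) * (n : ℝ) ^ 3 := by
        gcongr
        rw [le_div_iff₀ (by positivity)]
        nlinarith [pow_le_one₀ hd0.le hd_le_one (n := 2)]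

/-- triangle counting lemma: if `X, Y, Z` are pairwise disjoint vertex
sets of size `n` in a graph `G` such that each of the three bipartite graphs between them
is `ε`-regular with density `d`, where `0 < ε < d/2 ≤ 1/2`, then the number of triangles
with one vertex in each of `X, Y, Z` is `d³n³` up to an additive error of at most
`ξ·n³` with `ξ = 50ε/d²`. -/
theorem triangle_counting {V : Type*} [Fintype V] [DecidableEq V]
    (G : SimpleGraph V) [DecidableRel G.Adj]
    (X Y Z : Finset V) (n : ℕ)
    (hXY : Disjoint X Y) (hXZ : Disjoint X Z) (hYZ : Disjoint Y Z)
    (hX : X.card = n) (hY : Y.card = n) (hZ : Z.card = n)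
    (ε d : ℝ) (hε0 : 0 < ε) (hεd : ε < d / 2) (hd1 : d / 2 ≤ 1 / 2)
    (hregXY : EpsReg G ε d X Y) (hregXZ : EpsReg G ε d X Z) (hregYZ : EpsReg G ε d Y Z) :
    |(((((X ×ˢ Y) ×ˢ Z).filter fun p =>
          G.Adj p.1.1 p.1.2 ∧ G.Adj p.1.1 p.2 ∧ G.Adj p.1.2 p.2).card : ℝ))
        - d ^ 3 * (n : ℝ) ^ 3|
      ≤ (50 * ε / d ^ 2) * (n : ℝ) ^ 3 :=
  triangle_counting_general G X Y Z n hX hY hZ ε d hε0 hεd hd1 hregXY hregXZ hregYZ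
end
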